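/- arXiv:1812.03825 — 2 statements merged into one kernel-verified Lean document; each statement's English description precedes it below -/
import Mathlib

section
/- If each sentence of a corpus of N sentences is included in a sub-corpus independently with probability u = r/100, and every sentence has length ℓ, then for any word w, the expected ratio of the frequency of w in the sub-corpus to the total number of words in the sub-corpus (conditioned on the sub-corpus being nonempty) equals the probability P_C(w) that a uniformly random word drawn from the corpus is w. -/
open Finset Real

section Aux

variable {N : ℕ} (u : ℝ)

noncomputable def gfun (u : ℝ) (N : ℕ) (S : Finset (Fin N)) : ℝ :=
  if S.Nonempty then (u ^ S.card * (1 - u) ^ (N - S.card)) / S.card else 0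

noncomputable def Afun (u : ℝ) (N : ℕ) (i : Fin N) : ℝ :=
  ∑ S : Finset (Fin N), if i ∈ S then gfun u N S else 0

lemma Afun_const (u : ℝ) (N : ℕ) (i j : Fin N) : Afun u N i = Afun u N j := by
  unfold Afun
  refine Fintype.sum_equiv ((Equiv.swap i j).finsetCongr) _ _ ?_
  intro S
  have hmem : j ∈ (Equiv.swap i j).finsetCongr S ↔ i ∈ S := by
    simp [Equiv.finsetCongr_apply, Finset.mem_map_equiv, Equiv.swap_apply_right]
  have hg : gfun u N ((Equiv.swap i j).finsetCongr S) = gfun u N S := by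
    unfold gfun
    simp [Equiv.finsetCongr_apply, Finset.map_nonempty, Finset.card_map]
  rw [hg] at *
  by_cases h : i ∈ S
  · rw [if_pos h, if_pos (hmem.mpr h), hg]
  · rw [if_neg h, if_neg (fun hh => h (hmem.mp hh))]

lemma sum_Afun (u : ℝ) (N : ℕ) :
    ∑ i : Fin N, Afun u N i
      = ∑ S : Finset (Fin N), if S.Nonempty then u ^ S.card * (1 - u) ^ (N - S.card) else 0 := by
  unfold Afun
  rw [Finset.sum_comm]
  refine Finset.sum_congr rfl fun S _ => ?_
  rw [Finset.sum_ite_mem, Finset.univ_inter, Finset.sum_const, nsmul_eq_mul]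
  rcases S.eq_empty_or_nonempty with h | h
  · simp [h, gfun]
  · rw [if_pos h]
    have hcard : (S.card : ℝ) ≠ 0 := by
      exact_mod_cast Finset.card_ne_zero.mpr h
    unfold gfun
    rw [if_pos h]
    field_simp

end Aux

/-- Each of `N` sentences (each of length `ℓ`, containing `c i` occurrences of the word `w`)
is included in the sub-corpus independently with probability `u`.  Conditioned on the
sub-corpus being nonempty, the expected ratio of the count of `w` to the total word count
of the sub-corpus equals `P_C(w) = (∑ i, c i) / (N * ℓ)`. -/
theorem expected_ratio_eq_corpus_probability
    (N ℓ : ℕ) (hN : 1 ≤ N) (hℓ : 1 ≤ ℓ) (u : ℝ) (hu0 : 0 < u) (hu1 : u ≤ 1)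
    (c : Fin N → ℕ) (hc : ∀ i, c i ≤ ℓ) :
    (∑ S : Finset (Fin N), if S.Nonempty then
        (u ^ S.card * (1 - u) ^ (N - S.card)) *
          ((∑ i ∈ S, (c i : ℝ)) / ((S.card : ℝ) * (ℓ : ℝ))) else 0) /
      (∑ S : Finset (Fin N), if S.Nonempty then u ^ S.card * (1 - u) ^ (N - S.card) else 0)
    = (∑ i, (c i : ℝ)) / ((N : ℝ) * (ℓ : ℝ)) := by
  have i0 : Fin N := ⟨0, hN⟩
  set D : ℝ := ∑ S : Finset (Fin N), if S.Nonempty then u ^ S.card * (1 - u) ^ (N - S.card) else 0 with hD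
  have hℓ0 : (ℓ : ℝ) ≠ 0 := by positivity
  have hN0 : (N : ℝ) ≠ 0 := by positivity
  -- D is positive
  have hDpos : 0 < D := by
    have hterm : ∀ S : Finset (Fin N),
        0 ≤ (if S.Nonempty then u ^ S.card * (1 - u) ^ (N - S.card) else 0) := by
      intro S
      split
      · exact mul_nonneg (pow_nonneg hu0.le _) (pow_nonneg (by linarith) _)
      · exact le_refl 0
    have : Nonempty (Fin N) := ⟨i0⟩
    have huniv : (Finset.univ : Finset (Fin N)).Nonempty := Finset.univ_nonempty
    have hle := Finset.single_le_sum (fun S _ => hterm S) (Finset.mem_univ (Finset.univ : Finset (Fin N)))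
    rw [if_pos huniv] at hle
    have : 0 < u ^ (Finset.univ : Finset (Fin N)).card * (1 - u) ^ (N - (Finset.univ : Finset (Fin N)).card) := by
      rw [Finset.card_univ, Fintype.card_fin, Nat.sub_self, pow_zero, mul_one]
      positivity
    linarith
  -- sum of A equals N * A i0
  have hNA : (N : ℝ) * Afun u N i0 = D := by
    rw [hD, ← sum_Afun u N]
    rw [Finset.sum_congr rfl (fun i _ => Afun_const u N i i0)]
    simp [Finset.card_univ, mul_comm]
  -- numerator identity
  have hnum : (∑ S : Finset (Fin N), if S.Nonempty then
        (u ^ S.card * (1 - u) ^ (N - S.card)) *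
          ((∑ i ∈ S, (c i : ℝ)) / ((S.card : ℝ) * (ℓ : ℝ))) else 0)
      = (∑ i, (c i : ℝ)) * Afun u N i0 / ℓ := by
    have h1 : ∀ S : Finset (Fin N), (if S.Nonempty then
        (u ^ S.card * (1 - u) ^ (N - S.card)) *
          ((∑ i ∈ S, (c i : ℝ)) / ((S.card : ℝ) * (ℓ : ℝ))) else 0)
        = ∑ i : Fin N, (if i ∈ S then (c i : ℝ) * gfun u N S / ℓ else 0) := by
      intro S
      rw [Finset.sum_ite_mem, Finset.univ_inter]
      rcases S.eq_empty_or_nonempty with h | h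
      · simp [h]
      · rw [if_pos h]
        have hcard : (S.card : ℝ) ≠ 0 := by
          exact_mod_cast Finset.card_ne_zero.mpr h
        unfold gfun
        rw [if_pos h, ← Finset.sum_div, ← Finset.sum_mul]
        field_simp
    rw [Finset.sum_congr rfl (fun S _ => h1 S), Finset.sum_comm]
    have h2 : ∀ i : Fin N, (∑ S : Finset (Fin N), if i ∈ S then (c i : ℝ) * gfun u N S / ℓ else 0)
        = (c i : ℝ) * Afun u N i0 / ℓ := by
      intro i
      rw [← Afun_const u N i i0]
      unfold Afun
      rw [Finset.mul_sum, Finset.sum_div]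
      refine Finset.sum_congr rfl fun S _ => ?_
      split <;> simp
    rw [Finset.sum_congr rfl (fun i _ => h2 i), ← Finset.sum_div, ← Finset.sum_mul]
  have hNpos : (0:ℝ) < N := by positivity
  have hApos : 0 < Afun u N i0 := by nlinarith [hDpos, hNA]
  rw [hnum, ← hNA]
  field_simp
end

section
/- For the SGNS objective, for every word-context pair (w,c), the pointwise objective f(x) = #(w,c)·log σ(x) + k·(#(w)·#(c)/|D|)·log σ(-x), where σ is the logistic sigmoid, is maximized at x = log(#(w,c)·|D| / (#(w)·#(c))) - log k, i.e., at x = PMI(w,c) - log k. -/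
open Real

/-- The logistic sigmoid. -/
noncomputable def logisticSigmoid (x : ℝ) : ℝ := 1 / (1 + Real.exp (-x))

lemma log_logisticSigmoid (x : ℝ) :
    Real.log (logisticSigmoid x) = x - Real.log (1 + Real.exp x) := by
  have h1 : (0:ℝ) < 1 + Real.exp (-x) := by positivity
  have h2 : (1:ℝ) + Real.exp (-x) = (1 + Real.exp x) * Real.exp (-x) := by
    rw [add_mul, one_mul, ← Real.exp_add]
    simp [add_comm]
  unfold logisticSigmoid
  rw [one_div, Real.log_inv, h2, Real.log_mul (by positivity) (Real.exp_ne_zero _),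
    Real.log_exp]
  ring

lemma sgns_key (A K t t0 : ℝ) (hA : 0 < A) (hK : 0 < K) (ht : 0 < t)
    (ht0 : t0 = A / K) (hne : t ≠ t0) :
    A * Real.log t - (A + K) * Real.log (1 + t)
      < A * Real.log t0 - (A + K) * Real.log (1 + t0) := by
  have ht0pos : 0 < t0 := ht0 ▸ div_pos hA hK
  have h1t0 : (0:ℝ) < 1 + t0 := by linarith
  have h1t : (0:ℝ) < 1 + t := by linarith
  have hy : (0:ℝ) < t / t0 := div_pos ht ht0pos
  have hyne : (1:ℝ) ≠ t / t0 := by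
    intro h
    exact hne (by field_simp at h; linarith)
  have ha : (0:ℝ) < 1 / (1 + t0) := by positivity
  have hb : (0:ℝ) < t0 / (1 + t0) := by positivity
  have hab : 1 / (1 + t0) + t0 / (1 + t0) = 1 := by field_simp
  have hcc := strictConcaveOn_log_Ioi.2 (Set.mem_Ioi.2 one_pos) (Set.mem_Ioi.2 hy)
    hyne ha hb hab
  simp only [smul_eq_mul, Real.log_one, mul_zero, zero_add] at hcc
  have hval : 1 / (1 + t0) * 1 + t0 / (1 + t0) * (t / t0) = (1 + t) / (1 + t0) := by
    field_simp
  rw [hval] at hcc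
  have hlog1 : Real.log (t / t0) = Real.log t - Real.log t0 :=
    Real.log_div (ne_of_gt ht) (ne_of_gt ht0pos)
  have hlog2 : Real.log ((1 + t) / (1 + t0)) = Real.log (1 + t) - Real.log (1 + t0) :=
    Real.log_div (ne_of_gt h1t) (ne_of_gt h1t0)
  rw [hlog1, hlog2] at hcc
  have hbA : (A + K) * (t0 / (1 + t0)) = A := by
    rw [ht0]; field_simp; ring
  have h2 := mul_lt_mul_of_pos_left hcc (by linarith : (0:ℝ) < A + K)
  rw [← mul_assoc, hbA] at h2
  linarith

/-- For positive `#(w,c) = A`, `#(w) = B`, `#(c) = C`, `|D| = D` and `k`, the pointwise SGNS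
objective `f x = A·log σ(x) + k·(B·C/D)·log σ(-x)` attains its unique maximum at
`x₀ = log (A·D/(B·C)) - log k = PMI(w,c) - log k`. -/
theorem sgns_pointwise_objective_max
    (A B C D k : ℝ) (hA : 0 < A) (hB : 0 < B) (hC : 0 < C) (hD : 0 < D) (hk : 0 < k) :
    ∀ x : ℝ, x ≠ Real.log (A * D / (B * C)) - Real.log k →
      A * Real.log (logisticSigmoid x) + k * (B * C / D) * Real.log (logisticSigmoid (-x))
        < A * Real.log (logisticSigmoid (Real.log (A * D / (B * C)) - Real.log k))
            + k * (B * C / D) *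
                Real.log (logisticSigmoid (-(Real.log (A * D / (B * C)) - Real.log k))) := by
  intro x hx
  set K : ℝ := k * (B * C / D) with hKdef
  have hK : 0 < K := by positivity
  set x0 : ℝ := Real.log (A * D / (B * C)) - Real.log k with hx0def
  -- exp x0 = A / K
  have hx0 : Real.exp x0 = A / K := by
    rw [hx0def, Real.exp_sub, Real.exp_log (by positivity), Real.exp_log hk, hKdef]
    field_simp
  -- rewrite the objective: F x = A*x - (A+K)*log(1+exp x)
  have hF : ∀ y : ℝ,
      A * Real.log (logisticSigmoid y) + K * Real.log (logisticSigmoid (-y))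
        = A * Real.log (Real.exp y) - (A + K) * Real.log (1 + Real.exp y) := by
    intro y
    rw [log_logisticSigmoid, log_logisticSigmoid, Real.log_exp]
    have h : Real.log (1 + Real.exp (-y)) = Real.log (1 + Real.exp y) - y := by
      have h2 : (1:ℝ) + Real.exp (-y) = (1 + Real.exp y) * Real.exp (-y) := by
        rw [add_mul, one_mul, ← Real.exp_add]; simp [add_comm]
      rw [h2, Real.log_mul (by positivity) (Real.exp_ne_zero _), Real.log_exp]
      ring
    rw [h]
    ring
  rw [hF x, hF x0]
  have hne : Real.exp x ≠ A / K := by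
    intro h
    apply hx
    have := Real.exp_injective (h.trans hx0.symm)
    exact this
  exact sgns_key A K (Real.exp x) (A / K) hA hK (Real.exp_pos x) rfl
    hne |>.trans_eq (by rw [hx0])
end
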